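/- arXiv:2410.02407 — 2 statements merged into one kernel-verified Lean document; each statement's English description precedes it below -/
import Mathlib

section
/- (Lemma S3, uniform form.) Let u : ZMod d → ℤ be an admissible content, let p ≠ q and r ≠ s in ZMod d, and let Γ, Υ each be one of the collective operators S~ or A~. Then Γ^(p,q) Υ^(r,s) |S_u⟩ lies in the ℂ-linear span of the four Dicke vectors |S_{u + ε₁(e_p − e_q) + ε₂(e_r − e_s)}⟩ for ε₁, ε₂ ∈ {+1, −1}. -/
/-!
A transition operator |a⟩⟨b| acting at site i sends the basis vector at f to the one at f with
site i reset from b to a, which moves the content by e_a − e_b. Summing over sites, the collective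
operator maps |S_u⟩ to (u_a + 1)|S_{u + e_a − e_b}⟩, the factor counting the sites that carry a.
S and A are combinations of |p⟩⟨q| and |q⟩⟨p|, so each collective factor moves the content by
±(e_p − e_q), resp. ±(e_r − e_s).
-/

open Matrix Complex Finset

/-- ζ = exp(2πi/d). -/
noncomputable def zeta (d : ℕ) : ℂ := Complex.exp (2 * Real.pi * Complex.I / d)

/-- The shift matrix X = Σ_p |p+1⟩⟨p|. -/
noncomputable def shiftX (d : ℕ) [NeZero d] : Matrix (ZMod d) (ZMod d) ℂ :=
  ∑ p : ZMod d, Matrix.single (p + 1) p 1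

/-- The clock matrix Z = Σ_p ζ^p |p⟩⟨p|. -/
noncomputable def clockZ (d : ℕ) [NeZero d] : Matrix (ZMod d) (ZMod d) ℂ :=
  ∑ p : ZMod d, Matrix.single p p (zeta d ^ p.val)

/-- S^(j,k) = |j⟩⟨k| + |k⟩⟨j|. -/
noncomputable def Smat (d : ℕ) (j k : ZMod d) : Matrix (ZMod d) (ZMod d) ℂ :=
  Matrix.single j k 1 + Matrix.single k j 1

/-- A^(j,k) = −i|j⟩⟨k| + i|k⟩⟨j|. -/
noncomputable def Amat (d : ℕ) (j k : ZMod d) : Matrix (ZMod d) (ZMod d) ℂ :=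
  (-Complex.I) • Matrix.single j k 1 + Complex.I • Matrix.single k j 1

/-- D^(ℓ) = |ℓ⟩⟨ℓ| − |ℓ+1⟩⟨ℓ+1|. -/
noncomputable def Dmat (d : ℕ) (ℓ : ZMod d) : Matrix (ZMod d) (ZMod d) ℂ :=
  Matrix.single ℓ ℓ 1 - Matrix.single (ℓ + 1) (ℓ + 1) 1

/-- M acting at site i of an N-qudit system. -/
noncomputable def site (d N : ℕ) [NeZero d] (M : Matrix (ZMod d) (ZMod d) ℂ) (i : Fin N) :
    Matrix (Fin N → ZMod d) (Fin N → ZMod d) ℂ :=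
  Matrix.of fun f g =>
    M (f i) (g i) * ∏ j ∈ Finset.univ.erase i, (if f j = g j then (1 : ℂ) else 0)

/-- The collective operator M~ = Σ_i M_[i]. -/
noncomputable def coll (d N : ℕ) [NeZero d] (M : Matrix (ZMod d) (ZMod d) ℂ) :
    Matrix (Fin N → ZMod d) (Fin N → ZMod d) ℂ :=
  ∑ i : Fin N, site d N M i

/-- The N-fold tensor power of a d×d matrix. -/
noncomputable def tpow (d N : ℕ) [NeZero d] (M : Matrix (ZMod d) (ZMod d) ℂ) :
    Matrix (Fin N → ZMod d) (Fin N → ZMod d) ℂ :=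
  Matrix.of fun f g => ∏ i : Fin N, M (f i) (g i)

/-- Inner product of N-qudit vectors, conjugate-linear in the first argument. -/
noncomputable def qinner (d N : ℕ) [NeZero d] (v w : (Fin N → ZMod d) → ℂ) : ℂ :=
  ∑ f : Fin N → ZMod d, star (v f) * w f

/-- A content u is admissible if all entries are nonnegative and they sum to N. -/
def admissible (d N : ℕ) [NeZero d] (u : ZMod d → ℤ) : Prop :=
  (∀ k, 0 ≤ u k) ∧ ∑ k : ZMod d, u k = (N : ℤ)

/-- The Dicke vector |S_u⟩: sum of standard basis vectors over all f with |f⁻¹{k}| = u_k. -/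
noncomputable def dicke (d N : ℕ) [NeZero d] (u : ZMod d → ℤ) : (Fin N → ZMod d) → ℂ :=
  fun f =>
    if ∀ k : ZMod d, ((Finset.univ.filter fun i => f i = k).card : ℤ) = u k then 1 else 0

/-- The weight Σ_{m=0}^{d−1} m·u_m of a content. -/
def cweight (d : ℕ) (u : ZMod d → ℤ) : ℤ :=
  ∑ m ∈ Finset.range d, (m : ℤ) * u ((m : ℕ) : ZMod d)

/-- The code word |0̄⟩ determined by coefficients α. -/
noncomputable def codeZero (d N : ℕ) [NeZero d] (α : (ZMod d → ℤ) →₀ ℂ) :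
    (Fin N → ZMod d) → ℂ :=
  α.sum fun u c => c • dicke d N u

/-- The code word |k̄⟩ = X̄^k |0̄⟩. -/
noncomputable def codeword (d N : ℕ) [NeZero d] (α : (ZMod d → ℤ) →₀ ℂ) (k : ZMod d) :
    (Fin N → ZMod d) → ℂ :=
  (tpow d N (shiftX d)) ^ k.val *ᵥ codeZero d N α

/-- Sparseness of the code determined by α. -/
def sparse (d : ℕ) [NeZero d] (α : (ZMod d → ℤ) →₀ ℂ) : Prop :=
  ∀ u ∈ α.support, ∀ u' ∈ α.support, ∀ δ : ZMod d,
    (u, δ) ≠ (u', (0 : ZMod d)) → 4 < ∑ ξ : ZMod d, |u ξ - u' (ξ + δ)|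

section content
variable {ι α : Type*} [Fintype ι] [DecidableEq ι] [DecidableEq α]

def content (f : ι → α) : α → ℤ := fun k => #{i | f i = k}

lemma content_update {f : ι → α} {i : ι} {a : α} (hfi : f i = a) (b : α) :
    content (Function.update f i b) = content f + Pi.single b 1 - Pi.single a 1 := by
  funext k
  have key : ∀ c, (∑ j, if Function.update f i c j = k then (1 : ℤ) else 0)
      = (if c = k then 1 else 0) + ∑ j ∈ univ \ {i}, if f j = k then 1 else 0 := fun c => by
    simp only [Function.apply_update (fun _ x => if x = k then (1 : ℤ) else 0)]
    exact sum_update_of_mem (mem_univ i) _ _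
  have hf : content f k = ∑ j, if Function.update f i a j = k then (1 : ℤ) else 0 := by
    rw [← hfi, Function.update_eq_self, content, natCast_card_filter]
  rw [content, natCast_card_filter, key, Pi.sub_apply, Pi.add_apply, hf, key]
  simp only [Pi.single_apply, eq_comm (a := k)]
  ring

lemma prod_erase_ite_eq_ite_eq_update (f g : ι → α) (i : ι) :
    (∏ j ∈ univ.erase i, if f j = g j then (1 : ℂ) else 0)
      = if g = Function.update f i (g i) then 1 else 0 := by
  rw [prod_boole]
  congr 1
  simp [Function.eq_update_iff, eq_comm]

end content

lemma exists_eq_smul_single_add_smul_single {d : ℕ} {a b : ZMod d}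
    {M : Matrix (ZMod d) (ZMod d) ℂ} (hM : M = Smat d a b ∨ M = Amat d a b) :
    ∃ c₁ c₂ : ℂ, M = c₁ • single a b 1 + c₂ • single b a 1 := by
  rcases hM with rfl | rfl
  · exact ⟨1, 1, by simp [Smat]⟩
  · exact ⟨-I, I, rfl⟩

section collective
variable {d N : ℕ} [NeZero d]

lemma dicke_apply (u : ZMod d → ℤ) (f : Fin N → ZMod d) :
    dicke d N u f = if content f = u then 1 else 0 := by
  simp only [dicke, content, funext_iff]

lemma dicke_update {f : Fin N → ZMod d} {i : Fin N} {a : ZMod d} (hfi : f i = a)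
    (b : ZMod d) (u : ZMod d → ℤ) :
    dicke d N u (Function.update f i b) = dicke d N (u + (Pi.single a 1 - Pi.single b 1)) f := by
  rw [dicke_apply, dicke_apply, content_update hfi]
  congr 1
  exact propext ⟨fun h => by rw [← h]; abel, fun h => by rw [h]; abel⟩

lemma site_mulVec_apply (M : Matrix (ZMod d) (ZMod d) ℂ) (i : Fin N)
    (v : (Fin N → ZMod d) → ℂ) (f : Fin N → ZMod d) :
    (site d N M i *ᵥ v) f = ∑ c, M (f i) c * v (Function.update f i c) := by
  simp only [mulVec, dotProduct, site, of_apply, prod_erase_ite_eq_ite_eq_update]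
  rw [← sum_fiberwise univ (fun g => g i)]
  refine sum_congr rfl fun c _ => ?_
  rw [sum_eq_single_of_mem (Function.update f i c) (by simp)]
  · simp
  · intro g hg hne
    rw [(mem_filter.1 hg).2, if_neg hne, mul_zero, zero_mul]

lemma coll_mulVec_apply (M : Matrix (ZMod d) (ZMod d) ℂ) (v : (Fin N → ZMod d) → ℂ)
    (f : Fin N → ZMod d) :
    (coll d N M *ᵥ v) f = ∑ i, ∑ c, M (f i) c * v (Function.update f i c) := by
  simp only [coll, sum_mulVec, Finset.sum_apply, site_mulVec_apply]

lemma coll_add (M M' : Matrix (ZMod d) (ZMod d) ℂ) :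
    coll d N (M + M') = coll d N M + coll d N M' := by
  ext f g
  simp [coll, site, Matrix.sum_apply, add_mul, Finset.sum_add_distrib]

lemma coll_smul (c : ℂ) (M : Matrix (ZMod d) (ZMod d) ℂ) :
    coll d N (c • M) = c • coll d N M := by
  ext f g
  simp [coll, site, Matrix.sum_apply, Finset.mul_sum, mul_assoc]

lemma coll_single_mulVec_dicke {a b : ZMod d} (hab : a ≠ b) (u : ZMod d → ℤ) :
    coll d N (single a b 1) *ᵥ dicke d N u
      = ((u a : ℂ) + 1) • dicke d N (u + (Pi.single a 1 - Pi.single b 1)) := by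
  funext f
  set u' := u + (Pi.single a 1 - Pi.single b 1)
  have hsite : ∀ i, (∑ c, single a b (1 : ℂ) (f i) c * dicke d N u (Function.update f i c))
      = if f i = a then dicke d N u' f else 0 := fun i => by
    split_ifs with h
    · simp [single_apply, h, dicke_update h, u']
    · simp [Ne.symm h]
  rw [coll_mulVec_apply, sum_congr rfl fun i _ => hsite i, sum_ite, sum_const_zero, add_zero,
    sum_const, nsmul_eq_mul, Pi.smul_apply, smul_eq_mul, dicke_apply]
  split_ifs with hf
  · have hcount : (#{i | f i = a} : ℤ) = u a + 1 := by
      rw [← content, hf]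
      simp [u', hab]
    rw [mul_one, mul_one]
    exact_mod_cast hcount
  · simp

lemma coll_mulVec_dicke_mem_span {a b : ZMod d} (hab : a ≠ b) (c₁ c₂ : ℂ) (w : ZMod d → ℤ) :
    coll d N (c₁ • single a b 1 + c₂ • single b a 1) *ᵥ dicke d N w ∈
      Submodule.span ℂ {v | ∃ ε : ℤ, (ε = 1 ∨ ε = -1) ∧
        v = dicke d N (w + ε • (Pi.single a 1 - Pi.single b 1))} := by
  rw [coll_add, coll_smul, coll_smul, add_mulVec, smul_mulVec, smul_mulVec,
    coll_single_mulVec_dicke hab, coll_single_mulVec_dicke hab.symm]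
  refine Submodule.add_mem _ (Submodule.smul_mem _ _ (Submodule.smul_mem _ _ ?_))
    (Submodule.smul_mem _ _ (Submodule.smul_mem _ _ ?_))
  · exact Submodule.subset_span ⟨1, .inl rfl, by rw [one_smul]⟩
  · exact Submodule.subset_span ⟨-1, .inr rfl, by rw [neg_smul, one_smul, neg_sub]⟩

end collective

theorem stmt7_general (d N : ℕ) [NeZero d]
    (u : ZMod d → ℤ)
    (p q r s : ZMod d) (hpq : p ≠ q) (hrs : r ≠ s)
    (Γ Υ : Matrix (ZMod d) (ZMod d) ℂ)
    (hΓ : Γ = Smat d p q ∨ Γ = Amat d p q)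
    (hΥ : Υ = Smat d r s ∨ Υ = Amat d r s) :
    (coll d N Γ * coll d N Υ) *ᵥ dicke d N u ∈
      Submodule.span ℂ
        {w : (Fin N → ZMod d) → ℂ | ∃ ε₁ ε₂ : ℤ,
          (ε₁ = 1 ∨ ε₁ = -1) ∧ (ε₂ = 1 ∨ ε₂ = -1) ∧
          w = dicke d N (u + ε₁ • (Pi.single p 1 - Pi.single q 1)
                           + ε₂ • (Pi.single r 1 - Pi.single s 1))} := by
  obtain ⟨c₁, c₂, rfl⟩ := exists_eq_smul_single_add_smul_single hΓ
  obtain ⟨c₃, c₄, rfl⟩ := exists_eq_smul_single_add_smul_single hΥ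
  rw [← mulVec_mulVec]
  refine (Submodule.map_span_le (mulVecLin (coll d N _)) _ _).2 ?_
    (Submodule.mem_map_of_mem (coll_mulVec_dicke_mem_span hrs c₃ c₄ u))
  rintro _ ⟨ε₂, hε₂, rfl⟩
  refine Submodule.span_mono ?_ (coll_mulVec_dicke_mem_span hpq c₁ c₂ _)
  rintro _ ⟨ε₁, hε₁, rfl⟩
  exact ⟨ε₁, ε₂, hε₁, hε₂, by rw [add_right_comm]⟩

/-- Lemma S3, uniform form. -/
theorem stmt7 (d N : ℕ) [NeZero d] (hd : 2 ≤ d) (hN : 1 ≤ N)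
    (u : ZMod d → ℤ) (hu : admissible d N u)
    (p q r s : ZMod d) (hpq : p ≠ q) (hrs : r ≠ s)
    (Γ Υ : Matrix (ZMod d) (ZMod d) ℂ)
    (hΓ : Γ = Smat d p q ∨ Γ = Amat d p q)
    (hΥ : Υ = Smat d r s ∨ Υ = Amat d r s) :
    (coll d N Γ * coll d N Υ) *ᵥ dicke d N u ∈
      Submodule.span ℂ
        {w : (Fin N → ZMod d) → ℂ | ∃ ε₁ ε₂ : ℤ,
          (ε₁ = 1 ∨ ε₁ = -1) ∧ (ε₂ = 1 ∨ ε₂ = -1) ∧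
          w = dicke d N (u + ε₁ • (Pi.single p 1 - Pi.single q 1)
                           + ε₂ • (Pi.single r 1 - Pi.single s 1))} :=
  stmt7_general d N u p q r s hpq hrs Γ Υ hΓ hΥ
end

section
/- Let v be a permutation-invariant N-qudit vector. Then the diagonal second-order matrix elements are independent of the operator indices: for all p ≠ q and r ≠ s in ZMod d, ⟨v| S~^(p,q) S~^(p,q) |v⟩ = ⟨v| S~^(r,s) S~^(r,s) |v⟩; and for all ℓ, m ∈ ZMod d, ⟨v| D~^(ℓ) D~^(ℓ) |v⟩ = ⟨v| D~^(m) D~^(m) |v⟩. -/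
open Matrix Complex Finset

/-! Relabelling the levels of every qudit by the same permutation π of `ZMod d` fixes `v`: it
permutes the Dicke vectors, and their coefficients are π-invariant. The same relabelling
conjugates the collective operator of `M` into that of `M` with rows and columns relabelled by π.
As the symmetric group is 2-transitive, some π relabels `S^(p,q)` into `S^(r,s)`, and the
translation by `m - ℓ` relabels `D^(ℓ)` into `D^(m)`. -/

lemma Equiv.Perm.exists_apply_eq_and_apply_eq {α : Type*} {a b c e : α} (hab : a ≠ b)
    (hce : c ≠ e) : ∃ σ : Equiv.Perm α, σ a = c ∧ σ b = e := by
  obtain ⟨σ, hσ⟩ := (Equiv.Perm.isMultiplyPretransitive α 2).exists_smul_eq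
    ⟨![a, b], by simp [Function.Injective, Fin.forall_fin_two, hab, hab.symm]⟩
    ⟨![c, e], by simp [Function.Injective, Fin.forall_fin_two, hce, hce.symm]⟩
  exact ⟨σ, congr($hσ 0), congr($hσ 1)⟩

lemma Smat_submatrix {d : ℕ} (π : Equiv.Perm (ZMod d)) (p q : ZMod d) :
    (Smat d (π p) (π q)).submatrix π π = Smat d p q := by
  simp [Smat, submatrix_add]

lemma Dmat_submatrix_addRight {d : ℕ} (ℓ c : ZMod d) :
    (Dmat d (ℓ + c)).submatrix (Equiv.addRight c) (Equiv.addRight c) = Dmat d ℓ := by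
  rw [Dmat, Dmat, submatrix_sub, Pi.sub_apply, Pi.sub_apply, submatrix_single_equiv,
    submatrix_single_equiv]
  simp only [Equiv.addRight_symm, Equiv.coe_addRight, add_right_comm ℓ c 1, add_neg_cancel_right]

section LevelPermutation

variable {d N : ℕ} [NeZero d]

lemma dicke_comp_perm (u : ZMod d → ℤ) (π : Equiv.Perm (ZMod d)) (f : Fin N → ZMod d) :
    dicke d N u (π ∘ f) = dicke d N (u ∘ π) f := by
  unfold dicke
  congr 1
  exact propext (π.forall_congr fun {k} => by simp).symm

lemma sum_smul_dicke_comp_perm (β : (ZMod d → ℤ) →₀ ℂ)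
    (hβ : ∀ π : Equiv.Perm (ZMod d), ∀ u : ZMod d → ℤ, β (u ∘ π) = β u)
    (π : Equiv.Perm (ZMod d)) :
    (β.sum fun u c => c • dicke d N u) ∘ Equiv.piCongrRight (fun _ => π) =
      β.sum fun u c => c • dicke d N u := by
  have hfix : β.equivMapDomain (π.symm.arrowCongr (Equiv.refl ℤ)) = β :=
    Finsupp.ext fun u => hβ π.symm u
  funext f
  conv_rhs => rw [← hfix, Finsupp.sum_equivMapDomain]
  simp only [Finsupp.sum, Function.comp_apply, Finset.sum_apply, Pi.smul_apply]
  exact Finset.sum_congr rfl fun u _ => congrArg (β u • ·) (dicke_comp_perm u π f)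

lemma coll_submatrix_piCongrRight (M : Matrix (ZMod d) (ZMod d) ℂ) (π : Equiv.Perm (ZMod d)) :
    (coll d N M).submatrix (Equiv.piCongrRight fun _ => π) (Equiv.piCongrRight fun _ => π) =
      coll d N (M.submatrix π π) := by
  ext f g
  simp [coll, site, Matrix.sum_apply]

lemma qinner_submatrix_mulVec {v : (Fin N → ZMod d) → ℂ}
    (e : (Fin N → ZMod d) ≃ (Fin N → ZMod d)) (hv : v ∘ e = v)
    (B : Matrix (Fin N → ZMod d) (Fin N → ZMod d) ℂ) :
    qinner d N v (B.submatrix e e *ᵥ v) = qinner d N v (B *ᵥ v) := by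
  have hv' : v ∘ e.symm = v := funext fun f => by simpa using (congrFun hv (e.symm f)).symm
  rw [submatrix_mulVec_equiv, hv', qinner, qinner,
    ← e.sum_comp fun f => star (v f) * (B *ᵥ v) f]
  exact Finset.sum_congr rfl fun f _ => by rw [← congrFun hv f]; rfl

lemma qinner_coll_mul_coll_submatrix {v : (Fin N → ZMod d) → ℂ}
    (hv : ∀ π : Equiv.Perm (ZMod d), v ∘ Equiv.piCongrRight (fun _ => π) = v)
    (M : Matrix (ZMod d) (ZMod d) ℂ) (π : Equiv.Perm (ZMod d)) :
    qinner d N v ((coll d N (M.submatrix π π) * coll d N (M.submatrix π π)) *ᵥ v) =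
      qinner d N v ((coll d N M * coll d N M) *ᵥ v) := by
  rw [← coll_submatrix_piCongrRight, submatrix_mul_equiv, qinner_submatrix_mulVec _ (hv π)]

end LevelPermutation

theorem stmt19_general (d N : ℕ) [NeZero d]
    (v : (Fin N → ZMod d) → ℂ) (β : (ZMod d → ℤ) →₀ ℂ)
    (hperm : ∀ π : Equiv.Perm (ZMod d), ∀ u : ZMod d → ℤ, β (u ∘ π) = β u)
    (hv : v = β.sum fun u c => c • dicke d N u) :
    (∀ p q r s : ZMod d, p ≠ q → r ≠ s →
      qinner d N v ((coll d N (Smat d p q) * coll d N (Smat d p q)) *ᵥ v) =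
      qinner d N v ((coll d N (Smat d r s) * coll d N (Smat d r s)) *ᵥ v)) ∧
    (∀ ℓ m : ZMod d,
      qinner d N v ((coll d N (Dmat d ℓ) * coll d N (Dmat d ℓ)) *ᵥ v) =
      qinner d N v ((coll d N (Dmat d m) * coll d N (Dmat d m)) *ᵥ v)) := by
  have hvπ : ∀ π : Equiv.Perm (ZMod d), v ∘ Equiv.piCongrRight (fun _ => π) = v :=
    hv ▸ sum_smul_dicke_comp_perm β hperm
  refine ⟨fun p q r s hpq hrs => ?_, fun ℓ m => ?_⟩
  · obtain ⟨π, rfl, rfl⟩ := Equiv.Perm.exists_apply_eq_and_apply_eq hpq hrs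
    rw [← Smat_submatrix π p q, qinner_coll_mul_coll_submatrix hvπ]
  · rw [← Dmat_submatrix_addRight ℓ (m - ℓ), qinner_coll_mul_coll_submatrix hvπ,
      add_sub_cancel]

theorem stmt19 (d N : ℕ) [NeZero d] (hd : 2 ≤ d) (hN : 1 ≤ N)
    (v : (Fin N → ZMod d) → ℂ) (β : (ZMod d → ℤ) →₀ ℂ)
    (hadm : ∀ u : ZMod d → ℤ, ¬ admissible d N u → β u = 0)
    (hperm : ∀ π : Equiv.Perm (ZMod d), ∀ u : ZMod d → ℤ, β (u ∘ π) = β u)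
    (hv : v = β.sum fun u c => c • dicke d N u) :
    (∀ p q r s : ZMod d, p ≠ q → r ≠ s →
      qinner d N v ((coll d N (Smat d p q) * coll d N (Smat d p q)) *ᵥ v) =
      qinner d N v ((coll d N (Smat d r s) * coll d N (Smat d r s)) *ᵥ v)) ∧
    (∀ ℓ m : ZMod d,
      qinner d N v ((coll d N (Dmat d ℓ) * coll d N (Dmat d ℓ)) *ᵥ v) =
      qinner d N v ((coll d N (Dmat d m) * coll d N (Dmat d m)) *ᵥ v)) :=
  stmt19_general d N v β hperm hv
end
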